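/- Let z ∈ ℝ, let j ≥ 1 be an integer, let f : ℝ → ℝ be C^∞ on a neighborhood of z with f(z) = 0 and f'(z) ≠ 0, let h be a step function of order j at z, and let a₀, a₁, …, a_j be real numbers satisfying ∑_{m=0}^{j} a_m · (1 − m)^i = 1/(i+1) for every i = 0, 1, …, j. Define φ_j(x) = ∑_{m=0}^{j} a_m · f'(x + m·h(x)) and t_j(x) = x − f(x)/φ_j(x). Then the increment function h̃(x) = t_j(x) − x is a step function of order j + 1 at z: h̃(z) = 0, h̃'(z) = −1, and h̃^(i)(z) = 0 for every integer i with 2 ≤ i ≤ j + 1. (This is the inductive step producing the Newton–barycentric family of Proposition 4, in which each step function is defined recursively as h_j = t_{j−1} − id starting from the Newton map t₀.) -/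

import Mathlib

open Filter Asymptotics Nat

private lemma contDiffAt_deriv_top {f : ℝ → ℝ} {z : ℝ} (hf : ContDiffAt ℝ (⊤ : ℕ∞) f z) :
    ContDiffAt ℝ (⊤ : ℕ∞) (deriv f) z := by
  have h1 : ContDiffAt ℝ (⊤ : ℕ∞) (fderiv ℝ f) z := hf.fderiv_right (by simp)
  exact h1.clm_apply contDiffAt_const

private lemma pow_isBigO_pow {z : ℝ} {a b : ℕ} (hab : a ≤ b) :
    (fun x : ℝ => (x - z) ^ b) =O[nhds z] fun x => (x - z) ^ a := by
  refine IsBigO.of_bound 1 ?_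
  filter_upwards [Metric.closedBall_mem_nhds z one_pos] with x hx
  rw [Real.norm_eq_abs, Real.norm_eq_abs, abs_pow, abs_pow, one_mul]
  have h1 : |x - z| ≤ 1 := by
    rw [← Real.dist_eq]; exact Metric.mem_closedBall.mp hx
  exact pow_le_pow_of_le_one (abs_nonneg _) h1 hab

private lemma hasDerivAt_taylorPoly (c : ℕ → ℝ) (z x : ℝ) (N : ℕ) :
    HasDerivAt (fun y => ∑ i ∈ Finset.range (N + 1), c i * (y - z) ^ i)
      (∑ i ∈ Finset.range N, (c (i + 1) * (i + 1)) * (x - z) ^ i) x := by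
  have key : ∀ y : ℝ, ∑ i ∈ Finset.range (N + 1), c i * (y - z) ^ i
      = c 0 + ∑ i ∈ Finset.range N, c (i + 1) * (y - z) ^ (i + 1) := by
    intro y
    rw [Finset.sum_range_succ', pow_zero, mul_one, add_comm]
  have H : HasDerivAt (fun y => c 0 + ∑ i ∈ Finset.range N, c (i + 1) * (y - z) ^ (i + 1))
      (∑ i ∈ Finset.range N, (c (i + 1) * (i + 1)) * (x - z) ^ i) x := by
    have H2 : HasDerivAt (fun y => ∑ i ∈ Finset.range N, c (i + 1) * (y - z) ^ (i + 1))
        (∑ i ∈ Finset.range N, (c (i + 1) * (i + 1)) * (x - z) ^ i) x := by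
      refine HasDerivAt.fun_sum fun i _ => ?_
      have h1 : HasDerivAt (fun y : ℝ => y - z) 1 x := (hasDerivAt_id x).sub_const z
      have h2 := (h1.pow (i + 1)).const_mul (c (i + 1))
      refine h2.congr_deriv ?_
      rw [Nat.add_sub_cancel]
      push_cast
      ring
    simpa using H2.const_add (c 0)
  exact H.congr_of_eventuallyEq (Filter.Eventually.of_forall key)

private theorem taylor_isBigO (z : ℝ) (n : ℕ) :
    ∀ f : ℝ → ℝ, ContDiffAt ℝ (⊤ : ℕ∞) f z →
      (fun x => f x - ∑ i ∈ Finset.range (n + 1), iteratedDeriv i f z / (Nat.factorial i) * (x - z) ^ i)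
        =O[nhds z] fun x => (x - z) ^ (n + 1) := by
  induction n with
  | zero =>
      intro f hf
      have hd := (hf.differentiableAt (by simp)).hasDerivAt
      have h0 := hd.hasFDerivAt.isBigO_sub
      refine h0.congr ?_ ?_ <;> intro x <;> simp
  | succ n IH =>
      intro f hf
      have hf' : ContDiffAt ℝ (⊤ : ℕ∞) (deriv f) z := contDiffAt_deriv_top hf
      have coef : ∀ i : ℕ, iteratedDeriv i (deriv f) z / (Nat.factorial i)
          = (iteratedDeriv (i + 1) f z / (Nat.factorial (i+1))) * (i + 1) := by
        intro i
        rw [← iteratedDeriv_succ']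
        rw [Nat.factorial_succ]
        push_cast
        rw [div_mul_eq_mul_div, div_eq_div_iff]
        · ring
        · positivity
        · have := Nat.factorial_pos i; positivity
      have IH'' : (fun x => deriv f x - ∑ i ∈ Finset.range (n + 1),
          ((iteratedDeriv (i + 1) f z / (Nat.factorial (i+1))) * (i + 1)) * (x - z) ^ i)
          =O[nhds z] fun x => (x - z) ^ (n + 1) := by
        refine (IH (deriv f) hf').congr_left fun x => ?_
        congr 1
        exact Finset.sum_congr rfl fun i _ => by rw [coef]
      obtain ⟨C, hC0, hCw⟩ := IH''.exists_nonneg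
      have hev : ∀ᶠ y in nhds z, DifferentiableAt ℝ f y :=
        ((hf.of_le (m := 1) (by exact_mod_cast le_top)).eventually (by simp)).mono fun y hy => hy.differentiableAt (by simp)
      have hcomb := hCw.bound.and hev
      rw [Metric.eventually_nhds_iff_ball] at hcomb
      obtain ⟨δ, hδ, hball⟩ := hcomb
      refine IsBigO.of_bound C ?_
      filter_upwards [Metric.ball_mem_nhds z hδ] with x hx
      have hsub : Metric.closedBall z (dist x z) ⊆ Metric.ball z δ := fun y hy =>
        lt_of_le_of_lt (Metric.mem_closedBall.mp hy) (Metric.mem_ball.mp hx)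
      have hder : ∀ y ∈ Metric.closedBall z (dist x z),
          HasDerivWithinAt
            (fun y => f y - ∑ i ∈ Finset.range (n + 2),
              (iteratedDeriv i f z / (Nat.factorial i)) * (y - z) ^ i)
            (deriv f y - ∑ i ∈ Finset.range (n + 1),
              ((iteratedDeriv (i + 1) f z / (Nat.factorial (i+1))) * (i + 1)) * (y - z) ^ i)
            (Metric.closedBall z (dist x z)) y := by
        intro y hy
        have hdy := ((hball y (hsub hy)).2).hasDerivAt
        have hp := hasDerivAt_taylorPoly (fun i => iteratedDeriv i f z / (Nat.factorial i)) z y (n + 1)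
        exact (hdy.sub hp).hasDerivWithinAt
      have hbd : ∀ y ∈ Metric.closedBall z (dist x z),
          ‖deriv f y - ∑ i ∈ Finset.range (n + 1),
            ((iteratedDeriv (i + 1) f z / (Nat.factorial (i+1))) * (i + 1)) * (y - z) ^ i‖
            ≤ C * dist x z ^ (n + 1) := by
        intro y hy
        refine le_trans ((hball y (hsub hy)).1) ?_
        rw [Real.norm_eq_abs, abs_pow]
        have hyd : |y - z| ≤ dist x z := by
          rw [← Real.dist_eq]; exact Metric.mem_closedBall.mp hy
        exact mul_le_mul_of_nonneg_left (pow_le_pow_left₀ (abs_nonneg _) hyd _) hC0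
      have hzmem : z ∈ Metric.closedBall z (dist x z) := Metric.mem_closedBall_self dist_nonneg
      have hxmem : x ∈ Metric.closedBall z (dist x z) := Metric.mem_closedBall.mpr le_rfl
      have key := Convex.norm_image_sub_le_of_norm_hasDerivWithin_le hder hbd
        (convex_closedBall _ _) hzmem hxmem
      have hgz : (f z - ∑ i ∈ Finset.range (n + 2), (iteratedDeriv i f z / (Nat.factorial i)) * (z - z) ^ i)
          = 0 := by
        rw [Finset.sum_eq_single 0]
        · simp
        · intro b _ hb; simp [zero_pow hb]
        · intro h0; exact absurd (Finset.mem_range.mpr (Nat.succ_pos _)) h0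
      rw [hgz, sub_zero] at key
      calc ‖f x - ∑ i ∈ Finset.range (n + 2), iteratedDeriv i f z / (Nat.factorial i) * (x - z) ^ i‖
          ≤ C * dist x z ^ (n + 1) * ‖x - z‖ := key
        _ = C * ‖(x - z) ^ (n + 2)‖ := by
            rw [Real.dist_eq, Real.norm_eq_abs, Real.norm_eq_abs, abs_pow, pow_succ]
            ring

private theorem coeffs_of_isBigO (z : ℝ) (g : ℝ → ℝ) (hg : ContDiffAt ℝ (⊤ : ℕ∞) g z) (n : ℕ)
    (e : ℕ → ℝ)
    (hO : (fun x => g x - ∑ k ∈ Finset.range (n + 1), e k * (x - z) ^ k)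
      =O[nhds z] fun x => (x - z) ^ (n + 1)) :
    ∀ i, i ≤ n → iteratedDeriv i g z = (Nat.factorial i) * e i := by
  intro i
  induction i using Nat.strong_induction_on with
  | _ i IH =>
    intro hin
    have key := taylor_isBigO z i g hg
    have hsum : ∀ x : ℝ, ∑ k ∈ Finset.range (i + 1), iteratedDeriv k g z / (Nat.factorial k) * (x - z) ^ k
        = ∑ k ∈ Finset.range (i + 1), e k * (x - z) ^ k
          + (iteratedDeriv i g z / (Nat.factorial i) - e i) * (x - z) ^ i := by
      intro x
      rw [Finset.sum_range_succ, Finset.sum_range_succ]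
      have hterms : ∀ k ∈ Finset.range i,
          iteratedDeriv k g z / (Nat.factorial k) * (x - z) ^ k = e k * (x - z) ^ k := by
        intro k hk
        have hk' := Finset.mem_range.mp hk
        rw [IH k hk' (le_trans (Nat.le_of_lt hk') hin)]
        congr 1
        rw [mul_comm, mul_div_assoc, div_self, mul_one]
        exact_mod_cast Nat.factorial_ne_zero k
      rw [Finset.sum_congr rfl hterms]
      ring
    have hO1 : (fun x => g x - ∑ k ∈ Finset.range (n + 1), e k * (x - z) ^ k)
        =O[nhds z] fun x => (x - z) ^ (i + 1) :=
      hO.trans (pow_isBigO_pow (Nat.succ_le_succ hin))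
    have htail : (fun x => ∑ k ∈ Finset.range (n + 1), e k * (x - z) ^ k
        - ∑ k ∈ Finset.range (i + 1), e k * (x - z) ^ k)
        =O[nhds z] fun x => (x - z) ^ (i + 1) := by
      have hS : (fun x => ∑ k ∈ Finset.Ico (i + 1) (n + 1), e k * (x - z) ^ k)
          =O[nhds z] fun x => (x - z) ^ (i + 1) :=
        IsBigO.fun_sum fun k hk => (pow_isBigO_pow (Finset.mem_Ico.mp hk).1).const_mul_left _
      refine hS.congr_left fun x => ?_
      exact Finset.sum_Ico_eq_sub _ (Nat.succ_le_succ hin)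
    have hO2 : (fun x => g x - ∑ k ∈ Finset.range (i + 1), e k * (x - z) ^ k)
        =O[nhds z] fun x => (x - z) ^ (i + 1) :=
      (hO1.add htail).congr_left fun x => by ring
    have hfinal : (fun x => (iteratedDeriv i g z / (Nat.factorial i) - e i) * (x - z) ^ i)
        =O[nhds z] fun x => (x - z) ^ (i + 1) := by
      refine (hO2.sub key).congr_left fun x => ?_
      rw [hsum x]; ring
    have hd0 : iteratedDeriv i g z / (Nat.factorial i) - e i = 0 := by
      obtain ⟨C, hC0, hCw⟩ := hfinal.exists_nonneg
      have hb := hCw.bound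
      have hb' : ∀ᶠ x in nhdsWithin z (Set.Ioi z),
          |iteratedDeriv i g z / (Nat.factorial i) - e i| ≤ C * (x - z) := by
        filter_upwards [hb.filter_mono nhdsWithin_le_nhds, self_mem_nhdsWithin] with x hx hx2
        have ht : (0 : ℝ) < x - z := sub_pos.mpr hx2
        rw [Real.norm_eq_abs, Real.norm_eq_abs, abs_mul, abs_pow, abs_pow, abs_of_pos ht] at hx
        have h2 : |iteratedDeriv i g z / (Nat.factorial i) - e i| * (x - z) ^ i
            ≤ (C * (x - z)) * (x - z) ^ i := by
          calc |iteratedDeriv i g z / (Nat.factorial i) - e i| * (x - z) ^ i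
              ≤ C * (x - z) ^ (i + 1) := hx
            _ = (C * (x - z)) * (x - z) ^ i := by ring
        exact le_of_mul_le_mul_right h2 (pow_pos ht i)
      have hlim : Tendsto (fun x => C * (x - z)) (nhdsWithin z (Set.Ioi z)) (nhds 0) := by
        have h3 : Tendsto (fun x : ℝ => C * (x - z)) (nhds z) (nhds (C * (z - z))) :=
          (continuous_const.mul (continuous_id.sub continuous_const)).tendsto z
        simpa using h3.mono_left nhdsWithin_le_nhds
      have habs : |iteratedDeriv i g z / (Nat.factorial i) - e i| ≤ 0 := ge_of_tendsto hlim hb'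
      exact abs_eq_zero.mp (le_antisymm habs (abs_nonneg _))
    have hfact : ((Nat.factorial i) : ℝ) ≠ 0 := Nat.cast_ne_zero.mpr (Nat.factorial_ne_zero i)
    have heq := sub_eq_zero.mp hd0
    field_simp at heq
    rw [heq]

/-- Inductive step for the Newton–barycentric family: if `h` is a step function of
order `j` at a simple zero `z` of `f` and the coefficients `a₀, …, a_j` solve the
barycentric linear system, then the increment `t_j(x) - x` of the barycentric-type map
`t_j(x) = x - f(x) / (∑_{m=0}^{j} a_m · f'(x + m·h(x)))` is a step function of order
`j + 1` at `z`. -/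
theorem newton_barycentric_increment_is_step (z : ℝ) (j : ℕ) (hj : 1 ≤ j) (f h : ℝ → ℝ)
    (hf : ContDiffAt ℝ (⊤ : ℕ∞) f z) (hfz : f z = 0) (hf'z : deriv f z ≠ 0)
    (hsmooth : ContDiffAt ℝ (⊤ : ℕ∞) h z)
    (h0 : h z = 0) (h1 : deriv h z = -1)
    (hhi : ∀ i : ℕ, 2 ≤ i → i ≤ j → iteratedDeriv i h z = 0)
    (a : ℕ → ℝ)
    (ha : ∀ i : ℕ, i ≤ j →
      ∑ m ∈ Finset.range (j + 1), a m * (1 - (m : ℝ)) ^ i = 1 / (i + 1 : ℝ)) :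
    ((fun x => (x - f x /
        (∑ m ∈ Finset.range (j + 1), a m * deriv f (x + (m : ℝ) * h x))) - x) z = 0) ∧
    (deriv (fun x => (x - f x /
        (∑ m ∈ Finset.range (j + 1), a m * deriv f (x + (m : ℝ) * h x))) - x) z = -1) ∧
    (∀ i : ℕ, 2 ≤ i → i ≤ j + 1 →
      iteratedDeriv i (fun x => (x - f x /
        (∑ m ∈ Finset.range (j + 1), a m * deriv f (x + (m : ℝ) * h x))) - x) z = 0) := by
  have hf' : ContDiffAt ℝ (⊤ : ℕ∞) (deriv f) z := contDiffAt_deriv_top hf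
  set Phi : ℝ → ℝ := fun x => ∑ m ∈ Finset.range (j + 1), a m * deriv f (x + (m : ℝ) * h x)
    with hPhidef
  set F : ℝ → ℝ := fun x => (x - f x / Phi x) - x with hFdef
  -- Step 1 : the increment of h
  have hρ : (fun x => h x + (x - z)) =O[nhds z] fun x => (x - z) ^ (j + 1) := by
    have key := taylor_isBigO z j h hsmooth
    refine key.congr_left fun x => ?_
    have hS : ∑ k ∈ Finset.range (j + 1), iteratedDeriv k h z / (Nat.factorial k) * (x - z) ^ k
        = -(x - z) := by
      rw [Finset.sum_eq_single 1]
      · simp [iteratedDeriv_one, h1]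
      · intro b hb hb1
        rcases Nat.lt_or_ge b 2 with hb2 | hb2
        · interval_cases b
          · simp [h0]
          · exact absurd rfl hb1
        · rw [hhi b hb2 (Nat.lt_succ_iff.mp (Finset.mem_range.mp hb))]; simp
      · intro hmem; exact absurd (Finset.mem_range.mpr (by omega)) hmem
    rw [hS]; ring
  -- Step 2-4 : expansion of each term deriv f (x + m h x)
  have hfd' := taylor_isBigO z j (deriv f) hf'
  have hterm : ∀ m : ℕ, (fun x => deriv f (x + (m : ℝ) * h x)
      - ∑ k ∈ Finset.range (j + 1), iteratedDeriv k (deriv f) z / (Nat.factorial k)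
        * ((1 - (m : ℝ)) ^ k * (x - z) ^ k))
      =O[nhds z] fun x => (x - z) ^ (j + 1) := by
    intro m
    set u : ℝ → ℝ := fun x => x + (m : ℝ) * h x with hu
    have husmooth : ContDiffAt ℝ (⊤ : ℕ∞) u z := contDiffAt_id.add (contDiffAt_const.mul hsmooth)
    have hu0 : u z = z := by simp [hu, h0]
    have hucont : Tendsto u (nhds z) (nhds z) := by
      have := husmooth.continuousAt.tendsto
      rwa [hu0] at this
    have hw1 : (fun x => u x - z) =O[nhds z] fun x => x - z := by
      have hd := (husmooth.differentiableAt (by simp)).hasDerivAt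
      have h2 := hd.hasFDerivAt.isBigO_sub
      rwa [hu0] at h2
    have hwv : (fun x => (u x - z) - (1 - (m : ℝ)) * (x - z))
        =O[nhds z] fun x => (x - z) ^ (j + 1) := by
      refine (hρ.const_mul_left (m : ℝ)).congr_left fun x => ?_
      simp only [hu]; ring
    have hwO1 : (fun x => u x - z) =O[nhds z] (fun _ => (1 : ℝ)) := by
      have ht : Tendsto (fun x => u x - z) (nhds z) (nhds (z - z)) :=
        hucont.sub_const z
      rw [sub_self] at ht
      exact ht.isBigO_one ℝ
    have hvO1 : (fun x : ℝ => (1 - (m : ℝ)) * (x - z)) =O[nhds z] (fun _ => (1 : ℝ)) := by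
      have ht : Tendsto (fun x : ℝ => (1 - (m : ℝ)) * (x - z)) (nhds z)
          (nhds ((1 - (m : ℝ)) * (z - z))) :=
        (continuous_const.mul (continuous_id.sub continuous_const)).tendsto z
      rw [sub_self, mul_zero] at ht
      exact ht.isBigO_one ℝ
    have hpow : ∀ k : ℕ, (fun x => (u x - z) ^ k - ((1 - (m : ℝ)) * (x - z)) ^ k)
        =O[nhds z] fun x => (x - z) ^ (j + 1) := by
      intro k
      induction k with
      | zero => exact (isBigO_zero _ _).congr_left fun x => by simp
      | succ k IHk =>
        have A : (fun x => (u x - z) ^ k * ((u x - z) - (1 - (m : ℝ)) * (x - z)))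
            =O[nhds z] fun x => (x - z) ^ (j + 1) := by
          have := (hwO1.pow k).mul hwv
          simpa using this
        have B : (fun x => ((u x - z) ^ k - ((1 - (m : ℝ)) * (x - z)) ^ k)
            * ((1 - (m : ℝ)) * (x - z))) =O[nhds z] fun x => (x - z) ^ (j + 1) := by
          have := IHk.mul hvO1
          simpa using this
        refine (A.add B).congr_left fun x => by ring
    have hcomp := hfd'.comp_tendsto hucont
    have hcomp2 : (fun x => deriv f (u x) - ∑ k ∈ Finset.range (j + 1),
        iteratedDeriv k (deriv f) z / (Nat.factorial k) * (u x - z) ^ k)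
        =O[nhds z] fun x => (x - z) ^ (j + 1) := by
      refine (hcomp.trans ?_).congr_left fun x => by simp [Function.comp]
      have := hw1.pow (j + 1)
      exact this.congr_left fun x => by simp [Function.comp]
    have hsumdiff : (fun x => ∑ k ∈ Finset.range (j + 1),
        iteratedDeriv k (deriv f) z / (Nat.factorial k)
          * ((u x - z) ^ k - ((1 - (m : ℝ)) * (x - z)) ^ k))
        =O[nhds z] fun x => (x - z) ^ (j + 1) :=
      IsBigO.fun_sum fun k _ => (hpow k).const_mul_left _
    refine (hcomp2.add hsumdiff).congr_left fun x => ?_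
    have hsc : ∑ k ∈ Finset.range (j + 1), iteratedDeriv k (deriv f) z / (Nat.factorial k)
        * ((1 - (m : ℝ)) * (x - z)) ^ k
        = ∑ k ∈ Finset.range (j + 1), iteratedDeriv k (deriv f) z / (Nat.factorial k)
        * ((1 - (m : ℝ)) ^ k * (x - z) ^ k) :=
      Finset.sum_congr rfl fun k _ => by rw [mul_pow]
    rw [← hsc]
    simp only [mul_sub, Finset.sum_sub_distrib, hu]
    ring
  -- Step 5 : expansion of Phi
  have hPhiO : (fun x => Phi x - ∑ k ∈ Finset.range (j + 1),
      iteratedDeriv (k + 1) f z / (Nat.factorial (k + 1)) * (x - z) ^ k)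
      =O[nhds z] fun x => (x - z) ^ (j + 1) := by
    have hs : (fun x => ∑ m ∈ Finset.range (j + 1), a m * (deriv f (x + (m : ℝ) * h x)
        - ∑ k ∈ Finset.range (j + 1), iteratedDeriv k (deriv f) z / (Nat.factorial k)
          * ((1 - (m : ℝ)) ^ k * (x - z) ^ k)))
        =O[nhds z] fun x => (x - z) ^ (j + 1) :=
      IsBigO.fun_sum fun m _ => (hterm m).const_mul_left _
    refine hs.congr_left fun x => ?_
    have hswap : ∑ m ∈ Finset.range (j + 1), a m * ∑ k ∈ Finset.range (j + 1),
        iteratedDeriv k (deriv f) z / (Nat.factorial k) * ((1 - (m : ℝ)) ^ k * (x - z) ^ k)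
        = ∑ k ∈ Finset.range (j + 1),
          iteratedDeriv (k + 1) f z / (Nat.factorial (k + 1)) * (x - z) ^ k := by
      simp_rw [Finset.mul_sum]
      rw [Finset.sum_comm]
      refine Finset.sum_congr rfl fun k hk => ?_
      have hrw : ∀ m ∈ Finset.range (j + 1),
          a m * (iteratedDeriv k (deriv f) z / (Nat.factorial k)
            * ((1 - (m : ℝ)) ^ k * (x - z) ^ k))
          = (a m * (1 - (m : ℝ)) ^ k)
            * (iteratedDeriv k (deriv f) z / (Nat.factorial k) * (x - z) ^ k) := by
        intro m _; ring
      rw [Finset.sum_congr rfl hrw, ← Finset.sum_mul, ha k (Nat.lt_succ_iff.mp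
        (Finset.mem_range.mp hk)), ← iteratedDeriv_succ']
      rw [Nat.factorial_succ]
      have hk0 : ((Nat.factorial k : ℕ) : ℝ) ≠ 0 := Nat.cast_ne_zero.mpr (Nat.factorial_ne_zero k)
      have hk1 : ((k : ℝ) + 1) ≠ 0 := by positivity
      push_cast
      field_simp
    simp only [mul_sub]
    rw [Finset.sum_sub_distrib, hswap, hPhidef]
  -- Step 6 : ψ = (x-z) Phi - f  is O((x-z)^{j+2})
  have hfO := taylor_isBigO z (j + 1) f hf
  have hψ : (fun x => (x - z) * Phi x - f x) =O[nhds z] fun x => (x - z) ^ (j + 2) := by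
    have e1 : (fun x => (x - z) * (Phi x - ∑ k ∈ Finset.range (j + 1),
        iteratedDeriv (k + 1) f z / (Nat.factorial (k + 1)) * (x - z) ^ k))
        =O[nhds z] fun x => (x - z) ^ (j + 2) := by
      have := (isBigO_refl (fun x : ℝ => x - z) (nhds z)).mul hPhiO
      exact this.congr_right fun x => by ring
    refine (e1.sub hfO).congr_left fun x => ?_
    have hTQ : ∑ k ∈ Finset.range (j + 2),
        iteratedDeriv k f z / (Nat.factorial k) * (x - z) ^ k
        = iteratedDeriv 0 f z / (Nat.factorial 0)
          + (x - z) * ∑ k ∈ Finset.range (j + 1),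
            iteratedDeriv (k + 1) f z / (Nat.factorial (k + 1)) * (x - z) ^ k := by
      rw [Finset.sum_range_succ', pow_zero, mul_one, add_comm, Finset.mul_sum]
      congr 1
      exact Finset.sum_congr rfl fun k _ => by ring
    have hc0 : iteratedDeriv 0 f z / (Nat.factorial 0) = 0 := by
      simp [hfz]
    rw [hTQ, hc0]
    ring
  -- Step 7 : Phi z = deriv f z ≠ 0 and Phi is smooth
  have hPhiz : Phi z = deriv f z := by
    have h00 := ha 0 (Nat.zero_le j)
    simp only [pow_zero, mul_one] at h00
    have : Phi z = (∑ m ∈ Finset.range (j + 1), a m) * deriv f z := by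
      rw [hPhidef, Finset.sum_mul]
      refine Finset.sum_congr rfl fun m _ => ?_
      rw [h0, mul_zero, add_zero]
    rw [this, h00]
    norm_num
  have hPhiz' : Phi z ≠ 0 := by rw [hPhiz]; exact hf'z
  have hPhismooth : ContDiffAt ℝ (⊤ : ℕ∞) Phi z := by
    rw [hPhidef]
    refine ContDiffAt.sum fun m _ => ?_
    refine contDiffAt_const.mul ?_
    have husmooth : ContDiffAt ℝ (⊤ : ℕ∞) (fun x => x + (m : ℝ) * h x) z :=
      contDiffAt_id.add (contDiffAt_const.mul hsmooth)
    have hcd : ContDiffAt ℝ (⊤ : ℕ∞) (deriv f) ((fun x => x + (m : ℝ) * h x) z) := by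
      simpa [h0] using hf'
    exact hcd.comp z husmooth
  -- Step 8 : F has the right derivatives
  have hFsmooth : ContDiffAt ℝ (⊤ : ℕ∞) F z := by
    rw [hFdef]
    exact (contDiffAt_id.sub (hf.div hPhismooth hPhiz')).sub contDiffAt_id
  have hG : (fun x => F x - ∑ k ∈ Finset.range (j + 1 + 1),
      (if k = 1 then (-1 : ℝ) else 0) * (x - z) ^ k)
      =O[nhds z] fun x => (x - z) ^ (j + 1 + 1) := by
    have hsum1 : ∀ x : ℝ, ∑ k ∈ Finset.range (j + 1 + 1),
        (if k = 1 then (-1 : ℝ) else 0) * (x - z) ^ k = -(x - z) := by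
      intro x
      rw [Finset.sum_eq_single 1]
      · simp
      · intro b _ hb1; simp [hb1]
      · intro hmem; exact absurd (Finset.mem_range.mpr (by omega)) hmem
    have hev : ∀ᶠ x in nhds z, Phi x ≠ 0 := hPhismooth.continuousAt.eventually_ne hPhiz'
    have hinv : (fun x => (Phi x)⁻¹) =O[nhds z] (fun _ => (1 : ℝ)) := by
      have ht : Tendsto (fun x => (Phi x)⁻¹) (nhds z) (nhds (Phi z)⁻¹) :=
        (hPhismooth.continuousAt.tendsto).inv₀ hPhiz'
      exact ht.isBigO_one ℝ
    have hmul : (fun x => ((x - z) * Phi x - f x) * (Phi x)⁻¹)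
        =O[nhds z] fun x => (x - z) ^ (j + 2) := by
      have := hψ.mul hinv
      simpa using this
    refine hmul.congr' ?_ EventuallyEq.rfl
    filter_upwards [hev] with x hx
    rw [hsum1 x, hFdef]
    field_simp
    ring
  have hD := coeffs_of_isBigO z F hFsmooth (j + 1) _ hG
  refine ⟨?_, ?_, ?_⟩
  · have h00 := hD 0 (Nat.zero_le _)
    simp only [iteratedDeriv_zero] at h00
    simpa [hFdef, hPhidef] using h00
  · have h11 := hD 1 (by omega)
    rw [← iteratedDeriv_one]
    have : iteratedDeriv 1 F z = -1 := by
      rw [h11]; simp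
    simpa [hFdef, hPhidef] using this
  · intro i h2i hij
    have hii := hD i (by omega)
    have : iteratedDeriv i F z = 0 := by
      rw [hii, if_neg (by omega)]
      simp
    simpa [hFdef, hPhidef] using this
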